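/- Let H be a bialgebra over a commutative ring R, F a Drinfel'd twist on H with R-matrix ℛ := F₂₁ · F⁻¹ and ℛ⁻¹ = τ(ℛ) = Σ_k R_k ⊗ R^k, let V be an H-module (with R-algebra homomorphism ρ : H → End_R(V)), and let b : V × V → R be a symmetric R-bilinear form. Then the twisted pairing ⟨v, w⟩_⋆ := Σ_k b(f̄^k(v), f̄_k(w)) is braided symmetric: ⟨v, w⟩_⋆ = Σ_k ⟨R_k(w), R^k(v)⟩_⋆ for all v, w ∈ V. -/

import Mathlib

open scoped TensorProduct

noncomputable section

/-- `Δ ⊗ id` as an algebra homomorphism `H ⊗ H → (H ⊗ H) ⊗ H`. -/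
def comulTensorId (R H : Type*) [CommRing R] [Ring H] [Bialgebra R H] :
    (H ⊗[R] H) →ₐ[R] (H ⊗[R] H) ⊗[R] H :=
  Algebra.TensorProduct.map (Bialgebra.comulAlgHom R H) (AlgHom.id R H)

/-- `id ⊗ Δ` as an algebra homomorphism `H ⊗ H → H ⊗ (H ⊗ H)`. -/
def idTensorComul (R H : Type*) [CommRing R] [Ring H] [Bialgebra R H] :
    (H ⊗[R] H) →ₐ[R] H ⊗[R] (H ⊗[R] H) :=
  Algebra.TensorProduct.map (AlgHom.id R H) (Bialgebra.comulAlgHom R H)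

/-- `F` is a Drinfel'd twist on the bialgebra `H` with two-sided inverse `Finv`:
it is invertible and satisfies the 2-cocycle condition
`(F ⊗ 1) · (Δ ⊗ id)(F) = (1 ⊗ F) · (id ⊗ Δ)(F)` in `H ⊗ H ⊗ H`. -/
def IsDrinfeldTwist (R : Type*) {H : Type*} [CommRing R] [Ring H] [Bialgebra R H]
    (F Finv : H ⊗[R] H) : Prop :=
  F * Finv = 1 ∧ Finv * F = 1 ∧
    (TensorProduct.assoc R H H H) ((F ⊗ₜ[R] (1 : H)) * comulTensorId R H F) =
      ((1 : H) ⊗ₜ[R] F) * idTensorComul R H F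

/-- The `R`-matrix `ℛ := F₂₁ · F⁻¹` associated to a Drinfel'd twist, where
`F₂₁ = τ(F)` and `τ` is the flip of `H ⊗ H`. -/
def Rmat (R : Type*) {H : Type*} [CommRing R] [Ring H] [Bialgebra R H]
    (F Finv : H ⊗[R] H) : H ⊗[R] H :=
  (Algebra.TensorProduct.comm R H H) F * Finv

/-- The action of an element of `H ⊗ H` on `M ⊗ N`, acting with the first leg on `M`
and the second leg on `N` through the given representations. -/
def legAct {R H : Type*} [CommRing R] [Ring H] [Algebra R H]
    {M N : Type*} [AddCommGroup M] [Module R M] [AddCommGroup N] [Module R N]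
    (ρM : H →ₐ[R] Module.End R M) (ρN : H →ₐ[R] Module.End R N) :
    H ⊗[R] H →ₗ[R] (M ⊗[R] N →ₗ[R] M ⊗[R] N) :=
  (TensorProduct.homTensorHomMap (RingHom.id R) M N M N).comp
    (TensorProduct.map ρM.toLinearMap ρN.toLinearMap)

/-- The twisted pairing `⟨v, w⟩_⋆ := Σ b(f̄ᵏ(v), f̄ₖ(w))`, as a linear map on `V ⊗ V`. -/
def starPair {R H V : Type*} [CommRing R] [Ring H] [Bialgebra R H]
    [AddCommGroup V] [Module R V] (ρ : H →ₐ[R] Module.End R V)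
    (b : V →ₗ[R] V →ₗ[R] R) (Finv : H ⊗[R] H) : V ⊗[R] V →ₗ[R] R :=
  (TensorProduct.lift b).comp (legAct ρ ρ Finv)

/-!
Since `ℛ₂₁ = F · F⁻¹₂₁`, invertibility of `F` gives `F⁻¹ · ℛ₂₁ = F⁻¹₂₁`, so the right-hand side
is `Σ b(f̄_k(w), f̄^k(v))`; symmetry of `b` turns this into `⟨v, w⟩_⋆`.
-/

section legAct

variable {R H M N : Type*} [CommRing R] [Ring H] [Algebra R H]
  [AddCommGroup M] [Module R M] [AddCommGroup N] [Module R N]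
  (ρM : H →ₐ[R] Module.End R M) (ρN : H →ₐ[R] Module.End R N)

@[simp]
lemma legAct_tmul (a c : H) (m : M) (n : N) :
    legAct ρM ρN (a ⊗ₜ[R] c) (m ⊗ₜ[R] n) = ρM a m ⊗ₜ[R] ρN c n := by
  simp [legAct]

lemma legAct_eq_endTensorEndAlgHom_comp :
    legAct ρM ρN =
      (Module.endTensorEndAlgHom.comp (Algebra.TensorProduct.map ρM ρN)).toLinearMap :=
  TensorProduct.ext' fun _ _ => rfl

lemma legAct_mul (x y : H ⊗[R] H) :
    legAct ρM ρN (x * y) = legAct ρM ρN x ∘ₗ legAct ρM ρN y := by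
  rw [legAct_eq_endTensorEndAlgHom_comp]
  exact map_mul (Module.endTensorEndAlgHom.comp (Algebra.TensorProduct.map ρM ρN)) x y

lemma legAct_comm_apply (x : H ⊗[R] H) (t : M ⊗[R] N) :
    legAct ρN ρM (Algebra.TensorProduct.comm R H H x) (TensorProduct.comm R M N t) =
      TensorProduct.comm R M N (legAct ρM ρN x t) := by
  induction x using TensorProduct.induction_on with
  | zero => simp
  | add x₁ x₂ h₁ h₂ => simp only [map_add, LinearMap.add_apply, h₁, h₂]
  | tmul a c =>
    induction t using TensorProduct.induction_on with
    | zero => simp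
    | add t₁ t₂ h₁ h₂ => simp only [map_add, h₁, h₂]
    | tmul m n => simp

end legAct

section starPair

variable {R H V : Type*} [CommRing R] [Ring H] [Bialgebra R H]
  [AddCommGroup V] [Module R V] (ρ : H →ₐ[R] Module.End R V) (b : V →ₗ[R] V →ₗ[R] R)

lemma starPair_comm_apply (hb : ∀ v w : V, b v w = b w v) (x : H ⊗[R] H) (t : V ⊗[R] V) :
    starPair ρ b (Algebra.TensorProduct.comm R H H x) (TensorProduct.comm R V V t) =
      starPair ρ b x t := by
  have hflip : b.flip = b := LinearMap.ext₂ fun v w => hb w v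
  have hlift : ∀ s, TensorProduct.lift b (TensorProduct.comm R V V s) = TensorProduct.lift b s :=
    fun s => by simpa [hflip] using LinearMap.congr_fun (TensorProduct.lift_comp_comm_eq (f := b)) s
  rw [starPair, LinearMap.comp_apply, legAct_comm_apply, hlift]
  rfl

lemma starPair_mul_apply (x y : H ⊗[R] H) (t : V ⊗[R] V) :
    starPair ρ b (x * y) t = starPair ρ b x (legAct ρ ρ y t) := by
  simp only [starPair, LinearMap.comp_apply, legAct_mul]

end starPair

lemma mul_comm_Rmat {R H : Type*} [CommRing R] [Ring H] [Bialgebra R H] {F Finv : H ⊗[R] H}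
    (h : Finv * F = 1) :
    Finv * Algebra.TensorProduct.comm R H H (Rmat R F Finv) =
      Algebra.TensorProduct.comm R H H Finv := by
  have hcomm : ∀ x, Algebra.TensorProduct.comm R H H (Algebra.TensorProduct.comm R H H x) = x :=
    (Algebra.TensorProduct.comm R H H).symm_apply_apply
  rw [Rmat, map_mul, hcomm, ← mul_assoc, h, one_mul]

/-- For a Drinfel'd twist on `H`, an `H`-module `V`, and a symmetric
`R`-bilinear form `b` on `V`, the twisted pairing `⟨v, w⟩_⋆ := Σ b(f̄ᵏ(v), f̄ₖ(w))` is
braided symmetric: `⟨v, w⟩_⋆ = Σ_k ⟨R_k(w), R^k(v)⟩_⋆`,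
where `ℛ⁻¹ = τ(ℛ) = Σ_k R_k ⊗ R^k`. -/
theorem starPair_braided_symmetric
    (R : Type*) [CommRing R] (H : Type*) [Ring H] [Bialgebra R H]
    (V : Type*) [AddCommGroup V] [Module R V]
    (ρ : H →ₐ[R] Module.End R V)
    (b : V →ₗ[R] V →ₗ[R] R) (hb : ∀ v w : V, b v w = b w v)
    (F Finv : H ⊗[R] H) (hF : IsDrinfeldTwist R F Finv) :
    ∀ v w : V,
      starPair ρ b Finv (v ⊗ₜ[R] w) =
        starPair ρ b Finv
          (legAct ρ ρ ((Algebra.TensorProduct.comm R H H) (Rmat R F Finv))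
            (w ⊗ₜ[R] v)) := by
  intro v w
  calc starPair ρ b Finv (v ⊗ₜ[R] w)
      = starPair ρ b (Algebra.TensorProduct.comm R H H Finv) (w ⊗ₜ[R] v) :=
        (starPair_comm_apply ρ b hb Finv (v ⊗ₜ[R] w)).symm
    _ = starPair ρ b (Finv * Algebra.TensorProduct.comm R H H (Rmat R F Finv))
          (w ⊗ₜ[R] v) := by
        rw [mul_comm_Rmat hF.2.1]
    _ = _ := starPair_mul_apply ρ b _ _ _
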